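/- Let n, m, p ≥ 1, let A ∈ ℝ^{n×n}, B ∈ ℝ^{n×m}, C ∈ ℝ^{p×n}, D ∈ ℝ^{p×m} and γ > 0. Then there exists a symmetric positive definite P ∈ ℝ^{n×n} satisfying the bounded-real LMI with gain γ if and only if there exists a symmetric positive definite P ∈ ℝ^{n×n} such that the 4×4 block matrix [[P, PA, PB, 0],[AᵀP, P, 0, Cᵀ],[BᵀP, 0, γI, Dᵀ],[0, C, D, γI]] is positive definite. -/

import Mathlib

/-!
Regrouping the block rows and columns as (1st, 4th | 2nd, 3rd) turns the 4 × 4 matrix into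
`[[X, K], [Kᵀ, Y]]` with `X = diag(P, γI)`, `K = [[PA, PB], [C, D]]` and `Y = diag(P, γI)`.
Since `X` is positive definite, the whole matrix is positive definite iff its Schur complement
`Y - Kᵀ X⁻¹ K` is, and that Schur complement is `γ⁻¹` times the negated bounded-real matrix with
certificate `γP`. Rescaling the certificate by `γ` therefore matches solutions of the two LMIs.
-/

open Matrix

namespace Matrix

theorem posDef_submatrix_equiv_iff {R : Type*} [CommRing R] [PartialOrder R] [StarRing R]
    {m n : Type*} {M : Matrix n n R} (e : m ≃ n) :
    (M.submatrix e e).PosDef ↔ M.PosDef :=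
  ⟨fun h => by simpa using h.submatrix e.symm.injective, fun h => h.submatrix e.injective⟩

theorem posDef_real_smul_iff {n : Type*} {M : Matrix n n ℝ} {c : ℝ} (hc : 0 < c) :
    (c • M).PosDef ↔ M.PosDef :=
  ⟨fun h => by simpa [smul_smul, hc.ne'] using h.smul (inv_pos.2 hc), fun h => h.smul hc⟩

variable {m n : Type*} [Fintype m] [Fintype n] [DecidableEq m] [DecidableEq n]

open scoped ComplexOrder in
theorem posDef_fromBlocks₁₁_iff {𝕜 : Type*} [RCLike 𝕜] {A : Matrix m m 𝕜} (B : Matrix m n 𝕜)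
    (D : Matrix n n 𝕜) (hA : A.PosDef) [Invertible A] :
    (fromBlocks A B Bᴴ D).PosDef ↔ (D - Bᴴ * A⁻¹ * B).PosDef := by
  have hdet : (fromBlocks A B Bᴴ D).det = A.det * (D - Bᴴ * A⁻¹ * B).det := by
    rw [det_fromBlocks₁₁, invOf_eq_nonsing_inv]
  constructor
  · intro h
    refine ((PosDef.fromBlocks₁₁ B D hA).1 h.posSemidef).posDef_iff_det_ne_zero.2 ?_
    exact right_ne_zero_of_mul (hdet ▸ h.det_pos.ne')
  · intro h
    refine ((PosDef.fromBlocks₁₁ B D hA).2 h.posSemidef).posDef_iff_det_ne_zero.2 ?_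
    exact hdet ▸ mul_ne_zero hA.det_pos.ne' h.det_pos.ne'

theorem inv_fromBlocks_zero_smul_one {K : Type*} [Field K] (A : Matrix m m K) [Invertible A]
    {c : K} (hc : c ≠ 0) :
    (fromBlocks A 0 0 (c • 1 : Matrix n n K))⁻¹ = fromBlocks A⁻¹ 0 0 (c⁻¹ • 1) := by
  refine inv_eq_right_inv ?_
  simp [fromBlocks_multiply, smul_smul, hc, fromBlocks_one]

end Matrix

def Equiv.sumSumSumCommSwap (α β γ δ : Type*) : (α ⊕ β) ⊕ (γ ⊕ δ) ≃ (α ⊕ δ) ⊕ (β ⊕ γ) :=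
  (Equiv.sumCongr (Equiv.refl _) (Equiv.sumComm γ δ)).trans (Equiv.sumSumSumComm α β δ γ)

section BoundedReal

variable {n m p : Type*} [Fintype n]
  (A : Matrix n n ℝ) (B : Matrix n m ℝ) (C : Matrix p n ℝ) (D : Matrix p m ℝ) (γ : ℝ)

def boundedRealMatrix [Fintype p] [DecidableEq m] (P : Matrix n n ℝ) :
    Matrix (n ⊕ m) (n ⊕ m) ℝ :=
  fromBlocks (Aᵀ * P * A - P + Cᵀ * C) (Aᵀ * P * B + Cᵀ * D)
    (Bᵀ * P * A + Dᵀ * C) (Bᵀ * P * B + Dᵀ * D - γ ^ 2 • 1)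

def boundedRealSchurMatrix [DecidableEq m] [DecidableEq p] (P : Matrix n n ℝ) :
    Matrix ((n ⊕ n) ⊕ (m ⊕ p)) ((n ⊕ n) ⊕ (m ⊕ p)) ℝ :=
  fromBlocks (fromBlocks P (P * A) (Aᵀ * P) P) (fromBlocks (P * B) 0 0 Cᵀ)
    (fromBlocks (Bᵀ * P) 0 0 C) (fromBlocks (γ • 1) Dᵀ D (γ • 1))

variable [DecidableEq m] [DecidableEq p]

theorem boundedRealSchurMatrix_eq_submatrix {P : Matrix n n ℝ} (hP : Pᵀ = P) :
    boundedRealSchurMatrix A B C D γ P =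
      (fromBlocks (fromBlocks P 0 0 (γ • 1)) (fromBlocks (P * A) (P * B) C D)
        (fromBlocks (P * A) (P * B) C D)ᴴ (fromBlocks P 0 0 (γ • 1))).submatrix
          (Equiv.sumSumSumCommSwap n n m p) (Equiv.sumSumSumCommSwap n n m p) := by
  simp only [conjTranspose_eq_transpose_of_trivial, fromBlocks_transpose, transpose_mul, hP]
  ext (((i | i) | (i | i))) (((j | j) | (j | j))) <;> rfl

variable [Fintype p] [DecidableEq n]

theorem schur_complement_eq_smul_neg_boundedRealMatrix {P : Matrix n n ℝ} [Invertible P]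
    (hP : Pᵀ = P) (hγ : γ ≠ 0) :
    fromBlocks P 0 0 (γ • 1) - (fromBlocks (P * A) (P * B) C D)ᴴ *
        (fromBlocks P 0 0 (γ • 1 : Matrix p p ℝ))⁻¹ * fromBlocks (P * A) (P * B) C D =
      γ⁻¹ • -boundedRealMatrix A B C D γ (γ • P) := by
  simp only [inv_fromBlocks_zero_smul_one P hγ, conjTranspose_eq_transpose_of_trivial,
    fromBlocks_transpose, transpose_mul, hP, boundedRealMatrix, fromBlocks_multiply,
    sub_eq_add_neg, fromBlocks_neg, fromBlocks_smul, fromBlocks_add]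
  congr 1 <;>
  · simp only [Matrix.mul_zero, add_zero, zero_add, Matrix.smul_mul, Matrix.mul_smul,
      Matrix.mul_one, Matrix.mul_assoc, Matrix.inv_mul_cancel_left_of_invertible]
    match_scalars <;> field_simp

theorem posDef_boundedRealSchurMatrix_iff [Fintype m] (hγ : 0 < γ) {P : Matrix n n ℝ}
    (hP : P.PosDef) :
    (boundedRealSchurMatrix A B C D γ P).PosDef ↔
      (-boundedRealMatrix A B C D γ (γ • P)).PosDef := by
  have hPt : Pᵀ = P := hP.isHermitian
  let _ : Invertible P := hP.isUnit.invertible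
  have hγ1 : (γ • 1 : Matrix p p ℝ).PosDef := PosDef.one.smul hγ
  have hX : (fromBlocks P 0 0 (γ • 1 : Matrix p p ℝ)).PosDef := by
    simpa using (posDef_fromBlocks₁₁_iff 0 _ hP).2 (by simpa using hγ1)
  let _ : Invertible (fromBlocks P 0 0 (γ • 1 : Matrix p p ℝ)) := hX.isUnit.invertible
  rw [boundedRealSchurMatrix_eq_submatrix A B C D γ hPt, posDef_submatrix_equiv_iff,
    posDef_fromBlocks₁₁_iff _ _ hX, schur_complement_eq_smul_neg_boundedRealMatrix A B C D γ hPt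
      hγ.ne', posDef_real_smul_iff (inv_pos.2 hγ)]

end BoundedReal

theorem stmt3_general {n m p : ℕ}
    (A : Matrix (Fin n) (Fin n) ℝ) (B : Matrix (Fin n) (Fin m) ℝ)
    (C : Matrix (Fin p) (Fin n) ℝ) (D : Matrix (Fin p) (Fin m) ℝ)
    (γ : ℝ) (hγ : 0 < γ) :
    (∃ P : Matrix (Fin n) (Fin n) ℝ, P.PosDef ∧
      (-(Matrix.fromBlocks
          (Aᵀ * P * A - P + Cᵀ * C) (Aᵀ * P * B + Cᵀ * D)
          (Bᵀ * P * A + Dᵀ * C) (Bᵀ * P * B + Dᵀ * D - γ ^ 2 • 1))).PosDef) ↔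
    (∃ P : Matrix (Fin n) (Fin n) ℝ, P.PosDef ∧
      (Matrix.fromBlocks
        (Matrix.fromBlocks P (P * A) (Aᵀ * P) P)
        (Matrix.fromBlocks (P * B) 0 0 Cᵀ)
        (Matrix.fromBlocks (Bᵀ * P) 0 0 C)
        (Matrix.fromBlocks (γ • (1 : Matrix (Fin m) (Fin m) ℝ)) Dᵀ
          D (γ • (1 : Matrix (Fin p) (Fin p) ℝ)))).PosDef) := by
  constructor
  · rintro ⟨P, hP, h⟩
    have hP' : (γ⁻¹ • P).PosDef := hP.smul (inv_pos.2 hγ)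
    refine ⟨γ⁻¹ • P, hP', (posDef_boundedRealSchurMatrix_iff A B C D γ hγ hP').2 ?_⟩
    rwa [smul_inv_smul₀ hγ.ne']
  · rintro ⟨P, hP, h⟩
    exact ⟨γ • P, hP.smul hγ, (posDef_boundedRealSchurMatrix_iff A B C D γ hγ hP).1 h⟩

theorem stmt3 {n m p : ℕ} (hn : 1 ≤ n) (hm : 1 ≤ m) (hp : 1 ≤ p)
    (A : Matrix (Fin n) (Fin n) ℝ) (B : Matrix (Fin n) (Fin m) ℝ)
    (C : Matrix (Fin p) (Fin n) ℝ) (D : Matrix (Fin p) (Fin m) ℝ)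
    (γ : ℝ) (hγ : 0 < γ) :
    (∃ P : Matrix (Fin n) (Fin n) ℝ, P.PosDef ∧
      (-(Matrix.fromBlocks
          (Aᵀ * P * A - P + Cᵀ * C) (Aᵀ * P * B + Cᵀ * D)
          (Bᵀ * P * A + Dᵀ * C) (Bᵀ * P * B + Dᵀ * D - γ ^ 2 • 1))).PosDef) ↔
    (∃ P : Matrix (Fin n) (Fin n) ℝ, P.PosDef ∧
      (Matrix.fromBlocks
        (Matrix.fromBlocks P (P * A) (Aᵀ * P) P)
        (Matrix.fromBlocks (P * B) 0 0 Cᵀ)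
        (Matrix.fromBlocks (Bᵀ * P) 0 0 C)
        (Matrix.fromBlocks (γ • (1 : Matrix (Fin m) (Fin m) ℝ)) Dᵀ
          D (γ • (1 : Matrix (Fin p) (Fin p) ℝ)))).PosDef) :=
  stmt3_general A B C D γ hγ
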